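/- arXiv:1405.3626 — 2 statements merged into one kernel-verified Lean document; each statement's English description precedes it below -/
import Mathlib

section
/- For every integer n ≥ 1: if n = k^2 or n = 3k^2 for some positive integer k, then C̄_{3,1}(n) ≡ 2 (mod 4); otherwise C̄_{3,1}(n) ≡ 0 (mod 4). -/
/-!
Modulo 4 one has `1 + y = (1 - y) (1 + 2 y / (1 - y))` and `(1 + 2a) (1 + 2b) = 1 + 2 (a + b)`, so
`∏ₖ (1 + q^{dk}) / (1 - q^{dk}) ≡ 1 + 2 ∑_{j,k ≥ 1} q^{djk} ≡ 1 + 2 ∑_{k ≥ 1} q^{dk²}`: the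
off-diagonal terms cancel in pairs. The generating function of `C̄₃,₁` is
`∏ₖ (1 + q^k) / (1 - q^k) · (1 - q^{3k}) / (1 + q^{3k})`, and `(1 + 2a)² ≡ 1`, hence it is
`≡ (1 + 2 ∑ q^{k²}) (1 + 2 ∑ q^{3k²}) ≡ 1 + 2 ∑ q^{k²} + 2 ∑ q^{3k²}`, and no positive integer
is both a square and three times a square. All of this takes place in `ℤ⟦X⟧ ⧸ (4, X^{n+1})`,
where every product involved is finite.
-/

open Finset

theorem prod_range_three_mul {β : Type*} [CommMonoid β] (f : ℕ → β) (n : ℕ) :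
    ∏ k ∈ range (3 * n), f k = ∏ k ∈ range n, (f (3 * k) * f (3 * k + 1) * f (3 * k + 2)) := by
  induction n with
  | zero => simp
  | succ n ih =>
    rw [show 3 * (n + 1) = 3 * n + 2 + 1 by ring, prod_range_succ, prod_range_succ,
      prod_range_succ, ih, prod_range_succ]
    simp only [mul_assoc]

section CharFour

variable {A : Type*} [CommRing A]

theorem prod_one_add_two_mul_of_four_eq_zero (h4 : (4 : A) = 0) {ι : Type*} (s : Finset ι)
    (a : ι → A) : ∏ i ∈ s, (1 + 2 * a i) = 1 + 2 * ∑ i ∈ s, a i := by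
  classical
  induction s using Finset.induction_on with
  | empty => simp
  | insert i s hi ih =>
    rw [prod_insert hi, sum_insert hi, ih]
    linear_combination a i * (∑ j ∈ s, a j) * h4

theorem two_mul_sum_sum_of_symm (h4 : (4 : A) = 0) {ι : Type*} (s : Finset ι) (f : ι → ι → A)
    (hf : ∀ i j, f i j = f j i) : 2 * ∑ i ∈ s, ∑ j ∈ s, f i j = 2 * ∑ i ∈ s, f i i := by
  classical
  have hoff : ∑ p ∈ s.offDiag, 2 * f p.1 p.2 = 0 :=
    sum_involution (fun p _ => p.swap)
      (fun p _ => by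
        rw [Prod.fst_swap, Prod.snd_swap, hf p.2 p.1]
        linear_combination f p.1 p.2 * h4)
      (fun p hp _ => by simpa [Prod.ext_iff, eq_comm] using (mem_offDiag.mp hp).2.2)
      (fun p hp => by
        obtain ⟨h1, h2, h12⟩ := mem_offDiag.mp hp
        exact mem_offDiag.mpr ⟨h2, h1, Ne.symm h12⟩)
      (fun p _ => Prod.swap_swap p)
  rw [← sum_product', ← diag_union_offDiag, sum_union (disjoint_diag_offDiag s), mul_add,
    mul_sum s.offDiag, hoff, add_zero, sum_diag]

theorem one_sub_pow_mul_sum_pow {x : A} {M : ℕ} (hx : x ^ M = 0) {d : ℕ} (hd : 0 < d) :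
    (1 - x ^ d) * ∑ j ∈ range M, x ^ (d * (j + 1)) = x ^ d := by
  have hxd : (x ^ d) ^ M = 0 := by
    rw [← pow_mul]; exact pow_eq_zero_of_le (Nat.le_mul_of_pos_left M hd) hx
  simp_rw [mul_add, mul_one, pow_add, pow_mul, ← sum_mul]
  rw [← mul_assoc, mul_neg_geom_sum, hxd, sub_zero, one_mul]

theorem prod_one_add_pow_eq_prod_one_sub_pow_mul (h4 : (4 : A) = 0) {x : A} {M : ℕ}
    (hx : x ^ M = 0) {d : ℕ} (hd : 0 < d) :
    ∏ k ∈ range M, (1 + x ^ (d * (k + 1))) =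
      (∏ k ∈ range M, (1 - x ^ (d * (k + 1)))) *
        (1 + 2 * ∑ k ∈ range M, x ^ (d * (k + 1) ^ 2)) := by
  set g : ℕ → A := fun k => ∑ j ∈ range M, x ^ (d * (k + 1) * (j + 1))
  have hfactor : ∀ k, 1 + x ^ (d * (k + 1)) = (1 - x ^ (d * (k + 1))) * (1 + 2 * g k) := fun k => by
    linear_combination
      (-2) * one_sub_pow_mul_sum_pow hx (Nat.mul_pos hd k.succ_pos : 0 < d * (k + 1))
  have hdiag : 2 * ∑ k ∈ range M, g k = 2 * ∑ k ∈ range M, x ^ (d * (k + 1) ^ 2) := by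
    rw [two_mul_sum_sum_of_symm h4 _ _ fun k j => by ring_nf]
    simp_rw [mul_assoc, ← sq]
  rw [prod_congr rfl fun k _ => hfactor k, prod_mul_distrib,
    prod_one_add_two_mul_of_four_eq_zero h4, hdiag]

theorem prod_one_add_pow_mod_three {x : A} {M : ℕ} (hx : x ^ M = 0) :
    ∏ k ∈ range M, ((1 + x ^ (3 * k + 1)) * (1 + x ^ (3 * k + 2)) * (1 + x ^ (3 * (k + 1)))) =
      ∏ k ∈ range M, (1 + x ^ (k + 1)) := by
  have hvanish : ∏ k ∈ Ico M (3 * M), (1 + x ^ (k + 1)) = 1 :=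
    prod_eq_one fun k hk => by
      rw [pow_eq_zero_of_le (by simp at hk; omega) hx, add_zero]
  symm
  calc ∏ k ∈ range M, (1 + x ^ (k + 1))
      = (∏ k ∈ range M, (1 + x ^ (k + 1))) * ∏ k ∈ Ico M (3 * M), (1 + x ^ (k + 1)) := by
        rw [hvanish, mul_one]
    _ = ∏ k ∈ range (3 * M), (1 + x ^ (k + 1)) := prod_range_mul_prod_Ico _ (by omega)
    _ = _ := by rw [prod_range_three_mul]; ring_nf

theorem eq_of_mul_prod_one_sub_pow (h4 : (4 : A) = 0) {x : A} {M : ℕ} (hx : x ^ M = 0) {c : A}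
    (hc : c * ∏ k ∈ range M, (1 - x ^ (k + 1)) =
      ∏ k ∈ range M, ((1 - x ^ (3 * (k + 1))) * (1 + x ^ (3 * k + 1)) * (1 + x ^ (3 * k + 2)))) :
    c = 1 + 2 * ∑ k ∈ range M, (x ^ ((k + 1) ^ 2) + x ^ (3 * (k + 1) ^ 2)) := by
  set u := ∏ k ∈ range M, (1 - x ^ (k + 1))
  set S₁ := ∑ k ∈ range M, x ^ ((k + 1) ^ 2)
  set S₃ := ∑ k ∈ range M, x ^ (3 * (k + 1) ^ 2)
  set P₃ := ∏ k ∈ range M, (1 + x ^ (3 * (k + 1)))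
  set Q₃ := ∏ k ∈ range M, (1 - x ^ (3 * (k + 1)))
  set B := ∏ k ∈ range M, ((1 + x ^ (3 * k + 1)) * (1 + x ^ (3 * k + 2)))
  have hu : IsUnit u := IsUnit.prod_iff.mpr fun k _ =>
    (IsNilpotent.pow_succ k ⟨M, hx⟩).isUnit_one_sub
  have h₁ : ∏ k ∈ range M, (1 + x ^ (k + 1)) = u * (1 + 2 * S₁) := by
    simpa only [one_mul] using prod_one_add_pow_eq_prod_one_sub_pow_mul h4 hx one_pos
  have h₃ : P₃ = Q₃ * (1 + 2 * S₃) := prod_one_add_pow_eq_prod_one_sub_pow_mul h4 hx three_pos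
  have hQ₃ : Q₃ = P₃ * (1 + 2 * S₃) := by
    -- `(1 + 2 * S₃) ^ 2 = 1`
    linear_combination (-(1 + 2 * S₃)) * h₃ - Q₃ * S₃ * (1 + S₃) * h4
  have hB : B * P₃ = ∏ k ∈ range M, (1 + x ^ (k + 1)) := by
    rw [← prod_one_add_pow_mod_three hx, ← prod_mul_distrib]
  rw [sum_add_distrib]
  refine hu.mul_left_injective (?_ : c * u = _)
  calc c * u = Q₃ * B := by rw [hc, ← prod_mul_distrib]; simp only [mul_assoc]
    _ = (1 + 2 * S₃) * (B * P₃) := by rw [hQ₃]; ring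
    _ = (1 + 2 * (S₁ + S₃)) * u := by rw [hB, h₁]; linear_combination u * S₁ * S₃ * h4

end CharFour

theorem sq_ne_three_mul_sq {j k : ℕ} (hk : 0 < k) : j ^ 2 ≠ 3 * k ^ 2 := by
  intro h
  have h3 : IsSquare ((3 : ℕ) : ℚ) := ⟨j / k, by field_simp; exact_mod_cast h.symm⟩
  exact Nat.prime_three.prime.not_isSquare (Rat.isSquare_natCast_iff.mp h3)

namespace PowerSeries

section Truncation

variable {R : Type*} [CommRing R]

theorem X_pow_dvd_prod_range_sub_prod_range {g : ℕ → R⟦X⟧} (hg : ∀ k, X ^ (k + 1) ∣ g k - 1)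
    {K L : ℕ} (hKL : K ≤ L) : X ^ K ∣ ∏ k ∈ range L, g k - ∏ k ∈ range K, g k := by
  have htail : Ideal.Quotient.mk (Ideal.span {X ^ K}) (∏ k ∈ Ico K L, g k) = 1 := by
    refine (map_prod _ _ _).trans (prod_eq_one fun k hk => ?_)
    rw [← map_one (Ideal.Quotient.mk _), Ideal.Quotient.eq, Ideal.mem_span_singleton]
    exact (pow_dvd_pow X (by simp at hk; omega)).trans (hg k)
  rw [← Ideal.mem_span_singleton, ← Ideal.Quotient.eq, ← prod_range_mul_prod_Ico _ hKL, map_mul,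
    htail, mul_one]

theorem X_pow_dvd_mul_prod_range_sub_prod_range {f : R⟦X⟧} {g h : ℕ → R⟦X⟧}
    (hg : ∀ k, X ^ (k + 1) ∣ g k - 1) (hh : ∀ k, X ^ (k + 1) ∣ h k - 1)
    (hcoeff : ∀ N, coeff N (f * ∏ k ∈ range (N + 1), g k) = coeff N (∏ k ∈ range (N + 1), h k))
    (M : ℕ) : X ^ M ∣ f * ∏ k ∈ range M, g k - ∏ k ∈ range M, h k := by
  refine X_pow_dvd_iff.mpr fun N hN => ?_
  have hg' := X_pow_dvd_iff.mp ((X_pow_dvd_prod_range_sub_prod_range hg hN).mul_left f) N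
    N.lt_succ_self
  have hh' := X_pow_dvd_iff.mp (X_pow_dvd_prod_range_sub_prod_range hh hN) N N.lt_succ_self
  rw [mul_sub, map_sub] at hg'
  rw [map_sub] at hh' ⊢
  linear_combination hg' - hh' + hcoeff N

open Classical in
theorem coeff_sum_range_X_pow {e : ℕ → ℕ} (he : Function.Injective e) (hle : ∀ k, k ≤ e k)
    {n M : ℕ} (hn : n < M) :
    coeff n (∑ k ∈ range M, (X : R⟦X⟧) ^ e (k + 1)) = if ∃ k, 0 < k ∧ n = e k then 1 else 0 := by
  simp only [map_sum, coeff_X_pow]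
  split_ifs with h
  · obtain ⟨k, hk, rfl⟩ := h
    rw [sum_eq_single (k - 1) (fun j _ hj => if_neg fun hjk => hj (by have := he hjk; omega))
      (fun hk' => absurd (mem_range.mpr (by have := hle k; omega)) hk'), Nat.sub_add_cancel hk,
      if_pos rfl]
  · exact sum_eq_zero fun k _ => if_neg fun hk => h ⟨k + 1, k.succ_pos, hk⟩

end Truncation

theorem coeff_modEq_of_mk_eq {f g : ℤ⟦X⟧} {m M : ℕ}
    (h : Ideal.Quotient.mk (Ideal.span {(m : ℤ⟦X⟧), X ^ M}) f = Ideal.Quotient.mk _ g) {n : ℕ}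
    (hn : n < M) : coeff n f ≡ coeff n g [ZMOD m] := by
  obtain ⟨a, b, hab⟩ := Ideal.mem_span_pair.mp (Ideal.Quotient.eq.mp h)
  refine (Int.modEq_iff_dvd.mpr ⟨coeff n a, ?_⟩).symm
  rw [← map_sub, ← hab, map_add, coeff_mul_X_pow', if_neg (by omega), add_zero,
    ← map_natCast (C (R := ℤ)), coeff_mul_C, mul_comm]

theorem coeff_modEq_of_mul_prod_eq {F : ℤ⟦X⟧}
    (hF : ∀ N, coeff N (F * ∏ k ∈ range (N + 1), (1 - (X : ℤ⟦X⟧) ^ (k + 1))) =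
      coeff N (∏ k ∈ range (N + 1),
        ((1 - (X : ℤ⟦X⟧) ^ (3 * (k + 1))) * (1 + X ^ (3 * k + 1)) * (1 + X ^ (3 * k + 2)))))
    (n : ℕ) :
    coeff n F ≡ coeff n (1 + 2 * ∑ k ∈ range (n + 1), (X ^ ((k + 1) ^ 2) + X ^ (3 * (k + 1) ^ 2)))
      [ZMOD 4] := by
  set π := Ideal.Quotient.mk (Ideal.span {((4 : ℕ) : ℤ⟦X⟧), X ^ (n + 1)})
  have h4 : (4 : ℤ⟦X⟧ ⧸ Ideal.span {((4 : ℕ) : ℤ⟦X⟧), X ^ (n + 1)}) = 0 := by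
    rw [← map_ofNat π 4, Ideal.Quotient.eq_zero_iff_mem]
    exact Ideal.subset_span (by simp)
  have hx : π X ^ (n + 1) = 0 := by
    rw [← map_pow, Ideal.Quotient.eq_zero_iff_mem]
    exact Ideal.subset_span (by simp)
  have hfactor : ∀ k, (X : ℤ⟦X⟧) ^ (k + 1) ∣
      (1 - X ^ (3 * (k + 1))) * (1 + X ^ (3 * k + 1)) * (1 + X ^ (3 * k + 2)) - 1 := fun k => by
    have hX : ∀ j, k + 1 ≤ j → (X : ℤ⟦X⟧) ^ (k + 1) ∣ X ^ j := fun j hj => pow_dvd_pow X hj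
    rw [show ∀ a b c : ℤ⟦X⟧,
      (1 - a) * (1 + b) * (1 + c) - 1 = b * (1 + c) + c - a * ((1 + b) * (1 + c)) from
        fun a b c => by ring]
    exact dvd_sub (dvd_add (dvd_mul_of_dvd_left (hX _ (by omega)) _) (hX _ (by omega)))
      (dvd_mul_of_dvd_left (hX _ (by omega)) _)
  have hdvd := X_pow_dvd_mul_prod_range_sub_prod_range (fun k => ⟨-1, by ring⟩) hfactor hF (n + 1)
  have hc : π _ = π _ :=
    Ideal.Quotient.eq.mpr (Ideal.span_mono (by simp) (Ideal.mem_span_singleton.mpr hdvd))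
  simp only [map_mul, map_prod, map_sub, map_add, map_one, map_pow] at hc
  refine coeff_modEq_of_mk_eq ?_ (Nat.lt_add_one n)
  rw [eq_of_mul_prod_one_sub_pow h4 hx hc]
  simp only [map_add, map_mul, map_one, map_sum, map_pow, map_ofNat]
  rfl

open Classical in
theorem coeff_one_add_two_mul_sum_squares {n : ℕ} (hn : 1 ≤ n) :
    coeff n (1 + 2 * ∑ k ∈ range (n + 1), (X ^ ((k + 1) ^ 2) + X ^ (3 * (k + 1) ^ 2)) : ℤ⟦X⟧) =
      2 * ((if ∃ k, 0 < k ∧ n = k ^ 2 then 1 else 0) +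
        if ∃ k, 0 < k ∧ n = 3 * k ^ 2 then 1 else 0) := by
  rw [map_add, coeff_one, if_neg (by omega), zero_add, ← map_ofNat C 2, coeff_C_mul,
    sum_add_distrib, map_add,
    coeff_sum_range_X_pow (e := fun k => k ^ 2) (Nat.pow_left_injective two_ne_zero)
      (fun k => Nat.le_self_pow two_ne_zero k) (Nat.lt_add_one n),
    coeff_sum_range_X_pow (e := fun k => 3 * k ^ 2)
      ((mul_right_injective₀ three_ne_zero).comp (Nat.pow_left_injective two_ne_zero))
      (fun k => (Nat.le_self_pow two_ne_zero k).trans (Nat.le_mul_of_pos_left _ three_pos))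
      (Nat.lt_add_one n)]

end PowerSeries

/-- For `n ≥ 1`: `C̄₃₁(n) ≡ 2 (mod 4)` if `n = k²` or `n = 3k²` for some positive
integer `k`, and `C̄₃₁(n) ≡ 0 (mod 4)` otherwise. -/
theorem C31_mod_four (C : ℕ → ℤ)
    (hC : ∀ N : ℕ, PowerSeries.coeff N
      ((PowerSeries.mk fun n => C n) *
        ∏ n ∈ Finset.range (N + 1), (1 - (PowerSeries.X : PowerSeries ℤ) ^ (n + 1))) =
      PowerSeries.coeff N
      (∏ n ∈ Finset.range (N + 1),
        ((1 - (PowerSeries.X : PowerSeries ℤ) ^ (3 * (n + 1))) *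
          (1 + PowerSeries.X ^ (3 * n + 1)) * (1 + PowerSeries.X ^ (3 * n + 2)))))
    (n : ℕ) (hn : 1 ≤ n) :
    ((∃ k : ℕ, 0 < k ∧ (n = k ^ 2 ∨ n = 3 * k ^ 2)) → C n ≡ 2 [ZMOD 4]) ∧
    (¬ (∃ k : ℕ, 0 < k ∧ (n = k ^ 2 ∨ n = 3 * k ^ 2)) → C n ≡ 0 [ZMOD 4]) := by
  have hmod := PowerSeries.coeff_modEq_of_mul_prod_eq hC n
  rw [PowerSeries.coeff_one_add_two_mul_sum_squares hn, PowerSeries.coeff_mk] at hmod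
  simp only [and_or_left, exists_or]
  by_cases h₁ : ∃ k, 0 < k ∧ n = k ^ 2 <;> by_cases h₃ : ∃ k, 0 < k ∧ n = 3 * k ^ 2
  · obtain ⟨j, -, rfl⟩ := h₁
    obtain ⟨k, hk, hjk⟩ := h₃
    exact absurd hjk (sq_ne_three_mul_sq hk)
  all_goals simp_all
end

section
/- Let p be a prime and let r be an integer with 1 ≤ r ≤ p−1 such that 12r+1 is a quadratic nonresidue modulo p (i.e., there is no integer x with x^2 ≡ 12r+1 (mod p)). Then for all integers m ≥ 0, C̄_{4,1}(pm + r) ≡ 0 (mod 2). -/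
/-!
Modulo 2 signs disappear and squaring is a ring endomorphism, so with `E = ∏ (1 - X ^ k)`
the numerator `∏_{k ≢ 2 mod 4} (1 + X ^ k) = E(X) E(X⁴) / E(X²)` of the generating function
is `E³` and the series itself is `≡ E² = E(X²)`. By Euler's pentagonal number theorem its
`n`-th coefficient is then odd only if `n = k (3k - 1)`, that is, if `12 n + 1 = (6k - 1)²`; for
`n = p m + r` this makes `12 r + 1` a square modulo `p`.
-/

open Finset PowerSeries

theorem map_prod_range_eq_of_le {M N F : Type*} [CommMonoid M] [CommMonoid N] [FunLike F M N]
    [MonoidHomClass F M N] (φ : F) {f : ℕ → M} {m n : ℕ} (hmn : m ≤ n)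
    (hf : ∀ k, m ≤ k → φ (f k) = 1) :
    φ (∏ k ∈ range n, f k) = φ (∏ k ∈ range m, f k) := by
  rw [← prod_range_mul_prod_Ico f hmn, map_mul, map_prod φ f (Ico m n),
    prod_eq_one fun k hk => hf k (mem_Ico.1 hk).1, mul_one]

namespace PowerSeries

variable {R : Type*} [CommRing R]

instance charP (p : ℕ) [CharP R p] : CharP R⟦X⟧ p :=
  charP_of_injective_ringHom C_injective p

theorem mk_span_X_pow_eq_iff {n : ℕ} {f g : R⟦X⟧} :
    Ideal.Quotient.mk (Ideal.span {X ^ n}) f = Ideal.Quotient.mk (Ideal.span {X ^ n}) g ↔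
      ∀ i < n, coeff i f = coeff i g := by
  simp only [Ideal.Quotient.eq, Ideal.mem_span_singleton, X_pow_dvd_iff, map_sub, sub_eq_zero]

theorem mk_span_X_pow_X_pow {n j : ℕ} (h : n ≤ j) :
    Ideal.Quotient.mk (Ideal.span {X ^ n}) (X ^ j : R⟦X⟧) = 0 :=
  Ideal.Quotient.eq_zero_iff_mem.2 (Ideal.mem_span_singleton.2 (pow_dvd_pow X h))

theorem mk_mul_prod_range_eq_of_coeff_eq {F : R⟦X⟧} {f g : ℕ → R⟦X⟧}
    (hf : ∀ k, X ^ (k + 1) ∣ f k - 1) (hg : ∀ k, X ^ (k + 1) ∣ g k - 1)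
    (h : ∀ N, coeff N (F * ∏ k ∈ range (N + 1), f k) = coeff N (∏ k ∈ range (N + 1), g k))
    (N : ℕ) :
    Ideal.Quotient.mk (Ideal.span {X ^ (N + 1)}) (F * ∏ k ∈ range (N + 1), f k) =
      Ideal.Quotient.mk (Ideal.span {X ^ (N + 1)}) (∏ k ∈ range (N + 1), g k) := by
  refine mk_span_X_pow_eq_iff.2 fun i hi => ?_
  -- factors of index `k > i` are `≡ 1` modulo `X ^ (i + 1)`, so coefficient `i` is already fixed
  -- by the `(i + 1)`-st partial product
  have truncate (u : ℕ → R⟦X⟧) (hu : ∀ k, X ^ (k + 1) ∣ u k - 1) (G : R⟦X⟧) :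
      coeff i (G * ∏ k ∈ range (N + 1), u k) = coeff i (G * ∏ k ∈ range (i + 1), u k) := by
    refine mk_span_X_pow_eq_iff.1 ?_ i (lt_add_one i)
    rw [map_mul, map_mul, map_prod_range_eq_of_le _ (m := i + 1) (by omega) fun k hk => ?_]
    rw [← map_one (Ideal.Quotient.mk _), Ideal.Quotient.eq, Ideal.mem_span_singleton]
    exact (pow_dvd_pow X (by omega)).trans (hu k)
  rw [truncate f hf F, ← one_mul (∏ k ∈ range (N + 1), g k), truncate g hg 1, one_mul]
  exact h i

variable (R) in
noncomputable def eulerPartialProd (n : ℕ) : R⟦X⟧ := ∏ k ∈ range n, (1 - X ^ (k + 1))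

theorem eulerPartialProd_succ (n : ℕ) :
    eulerPartialProd R (n + 1) = eulerPartialProd R n * (1 - X ^ (n + 1)) :=
  prod_range_succ _ n

theorem mk_span_X_pow_eulerPartialProd {n s : ℕ} (h : n ≤ s) :
    Ideal.Quotient.mk (Ideal.span {X ^ n}) (eulerPartialProd R s) =
      Ideal.Quotient.mk (Ideal.span {X ^ n}) (eulerPartialProd R n) :=
  map_prod_range_eq_of_le _ h fun k hk => by
    rw [map_sub, map_one, mk_span_X_pow_X_pow (by omega), sub_zero]

theorem isUnit_eulerPartialProd (n : ℕ) : IsUnit (eulerPartialProd R n) := by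
  simp [isUnit_iff_constantCoeff, eulerPartialProd]

theorem coeff_eulerPartialProd {n s : ℕ} (h : n < s) :
    coeff n (eulerPartialProd R s) = coeff n (pentagonalSeries R) := by
  obtain ⟨t, ht⟩ := Filter.eventually_atTop.1
    (Filter.tendsto_finset_range.eventually (coeff_prod_one_sub_X_pow_eventually_eq R n))
  rw [← ht (max t s) (le_max_left t s)]
  refine mk_span_X_pow_eq_iff.1 ?_ n (lt_add_one n)
  exact (mk_span_X_pow_eulerPartialProd h).trans
    (mk_span_X_pow_eulerPartialProd (h.trans_le (le_max_right t s))).symm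

variable (R) in
noncomputable def c41NumeratorFactor (k : ℕ) : R⟦X⟧ :=
  (1 - X ^ (4 * (k + 1))) * (1 + X ^ (4 * k + 1)) * (1 + X ^ (4 * k + 3))

variable [CharP R 2]

theorem eulerPartialProd_four_mul_mul_pow_four (M : ℕ) :
    eulerPartialProd R (4 * M) * eulerPartialProd R M ^ 4 =
      (∏ k ∈ range M, c41NumeratorFactor R k) * eulerPartialProd R (2 * M) ^ 2 := by
  induction M with
  | zero => simp [eulerPartialProd]
  | succ M ih =>
    have frob (a : R⟦X⟧) (n : ℕ) : (1 - a) ^ 2 ^ n = 1 - a ^ 2 ^ n := by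
      rw [sub_pow_char_pow, one_pow]
    have e4 : eulerPartialProd R (4 * (M + 1)) = eulerPartialProd R (4 * M) *
        ((1 - X ^ (4 * M + 1)) * (1 - X ^ (4 * M + 2)) * (1 - X ^ (4 * M + 3)) *
          (1 - X ^ (4 * M + 4))) := by
      simp only [show 4 * (M + 1) = 4 * M + 3 + 1 by ring, eulerPartialProd_succ]; ring
    have e2 : eulerPartialProd R (2 * (M + 1)) ^ 2 = eulerPartialProd R (2 * M) ^ 2 *
        ((1 - X ^ (4 * M + 2)) * (1 - X ^ (4 * M + 4))) := by
      simp only [show 2 * (M + 1) = 2 * M + 1 + 1 by ring, eulerPartialProd_succ, mul_pow]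
      rw [← pow_one 2, frob, frob, ← pow_mul, ← pow_mul]
      ring_nf
    have e1 : eulerPartialProd R (M + 1) ^ 4 =
        eulerPartialProd R M ^ 4 * (1 - X ^ (4 * M + 4)) := by
      rw [eulerPartialProd_succ, mul_pow, show 4 = 2 ^ 2 by rfl, frob, ← pow_mul]
      ring_nf
    rw [e4, e2, e1, prod_range_succ, c41NumeratorFactor]
    linear_combination
      ((1 - X ^ (4 * M + 1)) * (1 - X ^ (4 * M + 2)) * (1 - X ^ (4 * M + 3)) *
        (1 - X ^ (4 * M + 4)) ^ 2) * ih -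
      ((∏ k ∈ range M, c41NumeratorFactor R k) *
        eulerPartialProd R (2 * M) ^ 2 * (1 - X ^ (4 * M + 2)) * (1 - X ^ (4 * M + 4)) ^ 2 *
        (X ^ (4 * M + 1) + X ^ (4 * M + 3))) * (CharTwo.two_eq_zero (R := R⟦X⟧))

theorem mk_eq_mk_eulerPartialProd_sq {F : R⟦X⟧} {N : ℕ}
    (h : Ideal.Quotient.mk (Ideal.span {X ^ (N + 1)}) (F * eulerPartialProd R (N + 1)) =
      Ideal.Quotient.mk (Ideal.span {X ^ (N + 1)})
        (∏ k ∈ range (N + 1), c41NumeratorFactor R k)) :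
    Ideal.Quotient.mk (Ideal.span {X ^ (N + 1)}) F =
      Ideal.Quotient.mk (Ideal.span {X ^ (N + 1)}) (eulerPartialProd R (N + 1) ^ 2) := by
  have key := congrArg (Ideal.Quotient.mk (Ideal.span {X ^ (N + 1)}))
    (eulerPartialProd_four_mul_mul_pow_four (R := R) (N + 1))
  rw [map_mul, map_mul, map_pow, map_pow, ← h, map_mul,
    mk_span_X_pow_eulerPartialProd (by omega : N + 1 ≤ 4 * (N + 1)),
    mk_span_X_pow_eulerPartialProd (by omega : N + 1 ≤ 2 * (N + 1))] at key
  rw [map_pow]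
  refine (((isUnit_eulerPartialProd (N + 1)).map (Ideal.Quotient.mk _)).pow 3).mul_left_cancel ?_
  linear_combination -key

theorem eulerPartialProd_sq (n : ℕ) :
    eulerPartialProd R n ^ 2 = expand 2 two_ne_zero (eulerPartialProd R n) := by
  rw [eulerPartialProd, ← prod_pow, map_prod]
  refine prod_congr rfl fun k _ => ?_
  rw [sub_pow_char, one_pow, map_sub, map_one, map_pow, expand_X, ← pow_mul, ← pow_mul,
    mul_comm]

theorem eq_expand_pentagonalSeries_of_coeff_mul_eq {F : R⟦X⟧}
    (hF : ∀ N, coeff N (F * eulerPartialProd R (N + 1)) =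
      coeff N (∏ k ∈ range (N + 1), c41NumeratorFactor R k)) :
    F = expand 2 two_ne_zero (pentagonalSeries R) := by
  have hE (k : ℕ) : (X : R⟦X⟧) ^ (k + 1) ∣ (1 - X ^ (k + 1)) - 1 := ⟨-1, by ring⟩
  have hQ (k : ℕ) : (X : R⟦X⟧) ^ (k + 1) ∣ c41NumeratorFactor R k - 1 := by
    rw [← Ideal.mem_span_singleton, ← Ideal.Quotient.eq, map_one]
    simp [c41NumeratorFactor, mk_span_X_pow_X_pow (show k + 1 ≤ 4 * (k + 1) by omega),
      mk_span_X_pow_X_pow (show k + 1 ≤ 4 * k + 1 by omega),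
      mk_span_X_pow_X_pow (show k + 1 ≤ 4 * k + 3 by omega)]
  ext N
  have hmod := mk_eq_mk_eulerPartialProd_sq (mk_mul_prod_range_eq_of_coeff_eq hE hQ hF N)
  rw [mk_span_X_pow_eq_iff.1 hmod N (lt_add_one N), eulerPartialProd_sq, coeff_expand,
    coeff_expand]
  split_ifs
  · exact coeff_eulerPartialProd (by omega)
  · rfl

end PowerSeries

theorem exists_sq_eq_of_coeff_expand_pentagonalSeries_ne_zero {R : Type*} [CommRing R] {n : ℕ}
    (h : coeff n (expand 2 two_ne_zero (pentagonalSeries R)) ≠ 0) :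
    ∃ x : ℤ, x ^ 2 = 12 * (n : ℤ) + 1 := by
  rw [coeff_expand] at h
  split_ifs at h with hn
  · obtain ⟨k, hk⟩ : n / 2 ∈ Set.range pentagonal := by_contra fun hk =>
      h (coeff_pentagonalSeries_eq_zero R hk)
    refine ⟨6 * k - 1, ?_⟩
    have hnk : (n : ℤ) = 2 * pentagonal k := by rw [hk]; omega
    rw [hnk]
    linear_combination -12 * two_mul_natCast_pentagonal k
  · exact absurd rfl h

theorem C41_nonresidue_mod_two_general (C : ℕ → ℤ)
    (hC : ∀ N : ℕ, PowerSeries.coeff (R := ℤ) N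
      ((PowerSeries.mk fun n => C n) *
        ∏ n ∈ Finset.range (N + 1), (1 - (PowerSeries.X : PowerSeries ℤ) ^ (n + 1))) =
      PowerSeries.coeff (R := ℤ) N
      (∏ n ∈ Finset.range (N + 1),
        ((1 - (PowerSeries.X : PowerSeries ℤ) ^ (4 * (n + 1))) *
          (1 + PowerSeries.X ^ (4 * n + 1)) * (1 + PowerSeries.X ^ (4 * n + 3)))))
    (p : ℕ) (r : ℕ)
    (hnr : ¬ ∃ x : ℤ, x ^ 2 ≡ 12 * (r : ℤ) + 1 [ZMOD p])
    (m : ℕ) :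
    C (p * m + r) ≡ 0 [ZMOD 2] := by
  have hmod2 : map (Int.castRingHom (ZMod 2)) (mk fun n => C n) =
      expand 2 two_ne_zero (pentagonalSeries (ZMod 2)) := by
    refine eq_expand_pentagonalSeries_of_coeff_mul_eq fun N => ?_
    have h := congrArg (Int.castRingHom (ZMod 2)) (hC N)
    simp only [← coeff_map, map_mul, map_prod, map_sub, map_add, map_one, map_pow, map_X] at h
    exact h
  rw [Int.modEq_zero_iff_dvd]
  refine (ZMod.intCast_zmod_eq_zero_iff_dvd _ 2).1 (by_contra fun hodd => ?_)
  have hcoeff : coeff (p * m + r) (expand 2 two_ne_zero (pentagonalSeries (ZMod 2))) ≠ 0 := by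
    simpa [← hmod2] using hodd
  obtain ⟨x, hx⟩ := exists_sq_eq_of_coeff_expand_pentagonalSeries_ne_zero hcoeff
  exact hnr ⟨x, Int.modEq_iff_dvd.2 ⟨-(12 * m), by push_cast at hx; linear_combination -hx⟩⟩

/-- If `p` is prime, `1 ≤ r ≤ p - 1`, and `12r + 1` is a quadratic nonresidue mod `p`,
then `C̄₄₁(pm + r) ≡ 0 (mod 2)` for all `m ≥ 0`. -/
theorem C41_nonresidue_mod_two (C : ℕ → ℤ)
    (hC : ∀ N : ℕ, PowerSeries.coeff (R := ℤ) N
      ((PowerSeries.mk fun n => C n) *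
        ∏ n ∈ Finset.range (N + 1), (1 - (PowerSeries.X : PowerSeries ℤ) ^ (n + 1))) =
      PowerSeries.coeff (R := ℤ) N
      (∏ n ∈ Finset.range (N + 1),
        ((1 - (PowerSeries.X : PowerSeries ℤ) ^ (4 * (n + 1))) *
          (1 + PowerSeries.X ^ (4 * n + 1)) * (1 + PowerSeries.X ^ (4 * n + 3)))))
    (p : ℕ) (hp : p.Prime) (r : ℕ) (hr1 : 1 ≤ r) (hr2 : r ≤ p - 1)
    (hnr : ¬ ∃ x : ℤ, x ^ 2 ≡ 12 * (r : ℤ) + 1 [ZMOD p])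
    (m : ℕ) :
    C (p * m + r) ≡ 0 [ZMOD 2] :=
  C41_nonresidue_mod_two_general C hC p r hnr m
end
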